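/- Let β, γ : {±1}^m → {−1,+1} be odd Boolean functions, σ : [m]→[m] a permutation, and S₁, S₂ collections of subsets of [m] such that |∑_{∅ ≠ S ∈ S₁∩S₂} β̂(S) γ̂(σ(S)) (1−2ε)^{|S|}| > 1/4, where 0 < ε ≤ 1/2. Then ∑_{∅ ≠ S ∈ S₁∩S₂} (1/|S|) γ̂(σ(S))² > ε/4. -/

import Mathlib

noncomputable def sgn (b : Bool) : ℝ := if b then -1 else 1

noncomputable def chi {m : ℕ} (S : Finset (Fin m)) (x : Fin m → Bool) : ℝ :=
  ∏ a ∈ S, sgn (x a)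

noncomputable def fhat {m : ℕ} (f : (Fin m → Bool) → ℝ) (S : Finset (Fin m)) : ℝ :=
  ((2 : ℝ) ^ m)⁻¹ * ∑ x : Fin m → Bool, chi S x * f x

lemma sum_chi_mul {m : ℕ} (x y : Fin m → Bool) :
    ∑ S : Finset (Fin m), chi S x * chi S y = if x = y then (2:ℝ)^m else 0 := by
  have h1 : ∀ S : Finset (Fin m), chi S x * chi S y
      = ∏ a ∈ S, (sgn (x a) * sgn (y a)) := by
    intro S; simp [chi, Finset.prod_mul_distrib]
  have h2 : ∑ S : Finset (Fin m), chi S x * chi S y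
      = ∏ a : Fin m, (sgn (x a) * sgn (y a) + 1) := by
    rw [Finset.prod_add]
    simp only [Finset.prod_const_one, mul_one]
    rw [← Finset.powerset_univ]
    exact (Finset.sum_congr rfl fun S _ => h1 S)
  rw [h2]
  have h3 : ∀ a : Fin m, sgn (x a) * sgn (y a) + 1 = if x a = y a then (2:ℝ) else 0 := by
    intro a; cases hx : x a <;> cases hy : y a <;> simp [sgn, hx, hy] <;> ring
  simp only [h3]
  by_cases hxy : x = y
  · subst hxy; simp
  · rw [if_neg hxy]
    obtain ⟨a, ha⟩ := Function.ne_iff.mp hxy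
    exact Finset.prod_eq_zero (Finset.mem_univ a) (if_neg ha)

lemma parseval {m : ℕ} (f : (Fin m → Bool) → ℝ) (hf : ∀ x, f x = 1 ∨ f x = -1) :
    ∑ S : Finset (Fin m), (fhat f S)^2 = 1 := by
  have hpow : ((2:ℝ)^m) ≠ 0 := by positivity
  have hterm : ∀ S : Finset (Fin m), (fhat f S)^2
      = ((2:ℝ)^m)⁻¹^2 * ∑ x : Fin m → Bool, ∑ y : Fin m → Bool,
          (f x * f y) * (chi S x * chi S y) := by
    intro S
    rw [fhat, mul_pow, pow_two (∑ x : Fin m → Bool, chi S x * f x), Finset.sum_mul_sum]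
    congr 1
    apply Finset.sum_congr rfl; intro x _
    apply Finset.sum_congr rfl; intro y _
    ring
  have step1 : ∑ S : Finset (Fin m), (fhat f S)^2
      = ((2:ℝ)^m)⁻¹^2 * ∑ x : Fin m → Bool, ∑ y : Fin m → Bool,
          (f x * f y) * ∑ S : Finset (Fin m), chi S x * chi S y := by
    simp only [hterm, ← Finset.mul_sum]
    congr 1
    rw [Finset.sum_comm]
    apply Finset.sum_congr rfl; intro x _
    rw [Finset.sum_comm]
    apply Finset.sum_congr rfl; intro y _
    rw [Finset.mul_sum]
  rw [step1]
  have step2 : ∀ x : Fin m → Bool, ∑ y : Fin m → Bool,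
      (f x * f y) * ∑ S : Finset (Fin m), chi S x * chi S y = (2:ℝ)^m := by
    intro x
    simp only [sum_chi_mul, mul_ite, mul_zero]
    rw [Finset.sum_ite_eq (Finset.univ) x (fun y => f x * f y * (2:ℝ)^m)]
    have : f x * f x = 1 := by rcases hf x with h | h <;> rw [h] <;> ring
    simp [this]
  simp only [step2, Finset.sum_const, Finset.card_univ, nsmul_eq_mul]
  have : (Fintype.card (Fin m → Bool) : ℝ) = (2:ℝ)^m := by
    simp [Fintype.card_fun]
  rw [this]
  field_simp

lemma pow_sq_le {ε : ℝ} (hε0 : 0 < ε) (hε1 : ε ≤ 1 / 2) {k : ℕ} (hk : 1 ≤ k) :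
    ((1 - 2*ε) ^ k)^2 ≤ (4*ε*k)⁻¹ := by
  have h0 : (0:ℝ) ≤ 1 - 2*ε := by linarith
  have hk' : (1:ℝ) ≤ (k:ℝ) := by exact_mod_cast hk
  have hu : (0:ℝ) < 4*ε*k := by positivity
  have h1 : (1 - 2*ε) ≤ Real.exp (-(2*ε)) := by
    have := Real.add_one_le_exp (-(2*ε)); linarith
  have h2 : ((1 - 2*ε) ^ k)^2 = (1 - 2*ε) ^ (2*k) := by
    rw [← pow_mul, Nat.mul_comm]
  rw [h2]
  have h3 : (1 - 2*ε) ^ (2*k) ≤ Real.exp (-(2*ε)) ^ (2*k) :=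
    pow_le_pow_left₀ h0 h1 (2*k)
  have h4 : Real.exp (-(2*ε)) ^ (2*k) = Real.exp (-(4*ε*k)) := by
    rw [← Real.exp_nat_mul]; congr 1; push_cast; ring
  have h5 : Real.exp (-(4*ε*k)) ≤ (4*ε*k)⁻¹ := by
    rw [Real.exp_neg]
    have : 4*ε*k ≤ Real.exp (4*ε*k) := by
      have := Real.add_one_le_exp (4*ε*k); linarith
    exact inv_anti₀ hu this
  linarith

/-- for odd Boolean functions `β, γ`, a permutation `σ`, and collections
`S₁, S₂` of subsets, if `|∑_{∅≠S∈S₁∩S₂} β̂(S) γ̂(σ(S)) (1−2ε)^{|S|}| > 1/4` then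
`∑_{∅≠S∈S₁∩S₂} (1/|S|) γ̂(σ(S))² > ε/4`. -/
theorem weighted_fourier_mass_lower_bound {m : ℕ} (ε : ℝ) (hε0 : 0 < ε) (hε1 : ε ≤ 1 / 2)
    (β γ : (Fin m → Bool) → ℝ)
    (hβ : ∀ x, β x = 1 ∨ β x = -1) (hγ : ∀ x, γ x = 1 ∨ γ x = -1)
    (hβodd : ∀ x, β (fun i => !(x i)) = -β x)
    (hγodd : ∀ x, γ (fun i => !(x i)) = -γ x)
    (σ : Equiv.Perm (Fin m))
    (S1 S2 : Finset (Finset (Fin m)))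
    (hyp : 1 / 4 <
      |∑ S ∈ (S1 ∩ S2).erase ∅, fhat β S * fhat γ (S.image σ) * (1 - 2 * ε) ^ S.card|) :
    ε / 4 < ∑ S ∈ (S1 ∩ S2).erase ∅, ((S.card : ℝ))⁻¹ * (fhat γ (S.image σ)) ^ 2 := by
  set T := (S1 ∩ S2).erase ∅ with hT
  set w : Finset (Fin m) → ℝ := fun S => fhat γ (S.image σ) * (1 - 2 * ε) ^ S.card with hw
  have hCS : (∑ S ∈ T, fhat β S * w S)^2
      ≤ (∑ S ∈ T, (fhat β S)^2) * (∑ S ∈ T, (w S)^2) :=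
    Finset.sum_mul_sq_le_sq_mul_sq T _ _
  have hβ1 : (∑ S ∈ T, (fhat β S)^2) ≤ 1 := by
    rw [← parseval β hβ]
    exact Finset.sum_le_sum_of_subset_of_nonneg (Finset.subset_univ T)
      (fun S _ _ => sq_nonneg _)
  have hsq : (1/4 : ℝ)^2 < (∑ S ∈ T, fhat β S * w S)^2 := by
    have habs : |(1/4 : ℝ)| < |∑ S ∈ T, fhat β S * w S| := by
      rw [abs_of_pos (by norm_num : (0:ℝ) < 1/4)]
      simpa [w, mul_assoc] using hyp
    calc (1/4 : ℝ)^2 = |(1/4:ℝ)|^2 := by rw [sq_abs]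
      _ < |∑ S ∈ T, fhat β S * w S|^2 :=
        pow_lt_pow_left₀ habs (abs_nonneg _) (by norm_num)
      _ = (∑ S ∈ T, fhat β S * w S)^2 := sq_abs _
  have hwsum : (∑ S ∈ T, (w S)^2)
      ≤ (4*ε)⁻¹ * ∑ S ∈ T, ((S.card : ℝ))⁻¹ * (fhat γ (S.image σ)) ^ 2 := by
    rw [Finset.mul_sum]
    apply Finset.sum_le_sum
    intro S hS
    have hScard : 1 ≤ S.card := by
      have hne : S ≠ ∅ := (Finset.mem_erase.mp hS).1
      exact Finset.card_pos.mpr (Finset.nonempty_of_ne_empty hne)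
    have hk : (0:ℝ) < S.card := by exact_mod_cast hScard
    have hb := pow_sq_le hε0 hε1 hScard
    have : (w S)^2 = (fhat γ (S.image σ))^2 * ((1 - 2*ε)^S.card)^2 := by
      simp [w, mul_pow]
    rw [this]
    have h6 : (fhat γ (S.image σ))^2 * ((1 - 2*ε)^S.card)^2
        ≤ (fhat γ (S.image σ))^2 * (4*ε*S.card)⁻¹ :=
      mul_le_mul_of_nonneg_left hb (sq_nonneg _)
    have h7 : (fhat γ (S.image σ))^2 * (4*ε*S.card)⁻¹
        = (4*ε)⁻¹ * (((S.card : ℝ))⁻¹ * (fhat γ (S.image σ)) ^ 2) := by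
      rw [mul_inv]
      ring
    linarith
  have hwnn : (0:ℝ) ≤ ∑ S ∈ T, (w S)^2 :=
    Finset.sum_nonneg fun _ _ => sq_nonneg _
  have hβnn : (0:ℝ) ≤ ∑ S ∈ T, (fhat β S)^2 :=
    Finset.sum_nonneg fun _ _ => sq_nonneg _
  have h8 : (1/4 : ℝ)^2 < ∑ S ∈ T, (w S)^2 := by
    nlinarith [hCS, hβ1, hsq, hwnn, hβnn]
  have h9 : (1/16 : ℝ) < (4*ε)⁻¹ * ∑ S ∈ T, ((S.card : ℝ))⁻¹ * (fhat γ (S.image σ)) ^ 2 := by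
    nlinarith
  have h10 : (0:ℝ) < 4*ε := by linarith
  rw [inv_mul_eq_div, lt_div_iff₀ h10] at h9
  linarith
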